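/- Lemma 2.1(ii)–(iii), subcritical case, of the paper: fix θ₁, θ₂ > 0, a natural number n₁, and β̃ ≤ 1. For each natural number n₂ set β = β̃·n₂ and let φ_β^{(n₁,n₂)}(x) := x^{θ₁+n₁-1}(1-x)^{θ₂+n₂-1}e^{βx} / I(n₁,n₂,β), where I(n₁,n₂,β) := ∫₀¹ x^{θ₁+n₁-1}(1-x)^{θ₂+n₂-1}e^{βx} dx. Then the probability measures φ_{β̃n₂}^{(n₁,n₂)}(x) dx on [0,1] converge weakly to the Dirac measure δ₀ as n₂ → ∞; equivalently, for every bounded continuous function f : [0,1] → ℝ, lim_{n₂→∞} ∫₀¹ f(x) φ_{β̃n₂}^{(n₁,n₂)}(x) dx = f(0). (Taking β̃ = 0 gives the case of fixed β and n₂ → ∞.) -/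

import Mathlib

open Real Filter Topology MeasureTheory Set

/-!
On `(0, 1)` the unnormalised posterior density factors as `p(x) h(x)^n₂` with
`p(x) = x^(θ₁+n₁-1) (1-x)^(θ₂-1)` integrable and `h(x) = (1-x) e^(β̃x)`. For `β̃ ≤ 1` the
function `h` attains its maximum on `[0, 1]` only at `0`, because `(1-x) e^(β̃x) ≤ (1-x) eˣ < 1`
for `x > 0`. Hence the normalised densities are Laplace-type peak functions at `0` with respect
to the measure `p(x) dx`, and the peak-function theorem of Mathlib gives the limit `f 0`.
-/

theorem setIntegral_Icc_withDensity_ofReal_eq_integral_Ioo {p : ℝ → ℝ} {a b : ℝ}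
    (hp : AEMeasurable p (volume.restrict (Ioo a b))) (hp_nonneg : ∀ x ∈ Ioo a b, 0 ≤ p x)
    (F : ℝ → ℝ) :
    ∫ x in Icc a b, F x ∂(volume.restrict (Ioo a b)).withDensity (fun x => ENNReal.ofReal (p x))
      = ∫ x in Ioo a b, p x * F x := by
  rw [restrict_withDensity measurableSet_Icc, Measure.restrict_restrict measurableSet_Icc,
    inter_eq_right.mpr Ioo_subset_Icc_self,
    integral_withDensity_eq_integral_toReal_smul₀ hp.ennreal_ofReal
      (ae_of_all _ fun _ => ENNReal.ofReal_lt_top)]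
  refine setIntegral_congr_fun measurableSet_Ioo fun x hx => ?_
  rw [ENNReal.toReal_ofReal (hp_nonneg x hx), smul_eq_mul]

theorem tendsto_intervalIntegral_mul_pow_div_of_unique_maximum {p c f : ℝ → ℝ} {a b x₀ : ℝ}
    (hab : a < b) (hp : IntervalIntegrable p volume a b) (hp_pos : ∀ x ∈ Ioo a b, 0 < p x)
    (hc : ContinuousOn c (Icc a b)) (hc_max : ∀ y ∈ Icc a b, y ≠ x₀ → c y < c x₀)
    (hc_nonneg : ∀ x ∈ Icc a b, 0 ≤ c x) (hx₀ : x₀ ∈ Icc a b) (hf : ContinuousOn f (Icc a b)) :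
    Tendsto (fun n : ℕ => ∫ x in a..b, f x * (p x * c x ^ n / ∫ y in a..b, p y * c y ^ n))
      atTop (𝓝 (f x₀)) := by
  have hpIoo : IntegrableOn p (Ioo a b) :=
    (intervalIntegrable_iff_integrableOn_Ioo_of_le hab.le).1 hp
  set μ := (volume.restrict (Ioo a b)).withDensity (fun x => ENNReal.ofReal (p x))
  have : IsFiniteMeasure μ := isFiniteMeasure_withDensity_ofReal hpIoo.2
  have hμ : ∀ F : ℝ → ℝ, ∫ x in Icc a b, F x ∂μ = ∫ x in a..b, p x * F x := fun F => by
    rw [setIntegral_Icc_withDensity_ofReal_eq_integral_Ioo hpIoo.1.aemeasurable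
      (fun x hx => (hp_pos x hx).le), intervalIntegral.integral_of_le hab.le,
      integral_Ioc_eq_integral_Ioo]
  have hμ_pos : ∀ u, IsOpen u → x₀ ∈ u → 0 < μ (u ∩ Icc a b) := by
    intro u hu hx₀u
    have hne : (u ∩ Ioo a b).Nonempty :=
      mem_closure_iff.1 (by rwa [closure_Ioo hab.ne]) u hu hx₀u
    have hpos : 0 < volume.restrict (Ioo a b) (u ∩ Ioo a b) := by
      rw [Measure.restrict_apply (hu.inter isOpen_Ioo).measurableSet, inter_assoc, inter_self]
      exact (hu.inter isOpen_Ioo).measure_pos volume hne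
    rw [pos_iff_ne_zero, Ne, withDensity_apply_eq_zero' hpIoo.1.aemeasurable.ennreal_ofReal]
    refine fun h0 => hpos.ne' (measure_mono_null (fun x hx => ?_) h0)
    exact ⟨by simpa using hp_pos x hx.2, hx.1, Ioo_subset_Icc_self hx.2⟩
  have hc₀ : 0 < c x₀ := by
    obtain ⟨y, hy, hyx₀⟩ : ∃ y ∈ Icc a b, y ≠ x₀ := by
      rcases eq_or_ne a x₀ with rfl | h
      · exact ⟨b, right_mem_Icc.2 hab.le, hab.ne'⟩
      · exact ⟨a, left_mem_Icc.2 hab.le, h⟩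
    exact (hc_nonneg y hy).trans_lt (hc_max y hy hyx₀)
  refine (tendsto_setIntegral_pow_smul_of_unique_maximum_of_isCompact_of_measure_nhdsWithin_pos
    isCompact_Icc hμ_pos hc hc_max hc_nonneg hc₀ hx₀
    (hf.integrableOn_compact isCompact_Icc) (hf x₀ hx₀)).congr fun n => ?_
  simp only [hμ, smul_eq_mul, ← intervalIntegral.integral_const_mul]
  congr 1 with x
  ring

theorem intervalIntegrable_rpow_mul_one_sub_rpow {p q : ℝ} (hp : -1 < p) (hq : -1 < q) :
    IntervalIntegrable (fun x => x ^ p * (1 - x) ^ q) volume 0 1 := by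
  have left : ∀ {p q : ℝ}, -1 < p →
      IntervalIntegrable (fun x => x ^ p * (1 - x) ^ q) volume 0 (1 / 2) := fun hp =>
    (intervalIntegral.intervalIntegrable_rpow' hp).mul_continuousOn <|
      (continuousOn_const.sub continuousOn_id).rpow_const fun x hx => Or.inl <| by
        rw [uIcc_of_le (by norm_num)] at hx
        simp only [Pi.sub_apply, id_eq]
        linarith [hx.2]
  have right : IntervalIntegrable (fun x => x ^ p * (1 - x) ^ q) volume (1 / 2) 1 := by
    have := ((left (q := p) hq).comp_sub_left 1).symm
    norm_num at this
    simpa only [mul_comm] using this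
  exact (left hp).trans right

theorem one_sub_mul_exp_lt_one {β y : ℝ} (hβ : β ≤ 1) (hy₀ : 0 < y) (hy₁ : y ≤ 1) :
    (1 - y) * exp (β * y) < 1 :=
  calc (1 - y) * exp (β * y) ≤ (1 - y) * exp y :=
        mul_le_mul_of_nonneg_left (exp_le_exp.2 (by nlinarith)) (by linarith)
    _ < exp (-y) * exp y :=
        mul_lt_mul_of_pos_right (by linarith [add_one_lt_exp (neg_ne_zero.2 hy₀.ne')]) (exp_pos y)
    _ = 1 := by rw [← exp_add, neg_add_cancel, exp_zero]

theorem rpow_mul_one_sub_rpow_add_natCast_mul_exp {a b β x : ℝ} (n : ℕ) (hx : x < 1) :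
    x ^ a * (1 - x) ^ (b + n - 1) * exp (β * n * x)
      = x ^ a * (1 - x) ^ (b - 1) * ((1 - x) * exp (β * x)) ^ n := by
  rw [add_sub_right_comm, rpow_add_natCast (sub_pos.2 hx).ne', mul_comm β, mul_assoc (n : ℝ),
    exp_nat_mul, mul_pow]
  ring

/-- Lemma 2.1(ii)–(iii), subcritical case: with `β = β̃·n₂`, `β̃ ≤ 1`, the posterior
density `φ_{β̃n₂}^{(n₁,n₂)}(x) = x^{θ₁+n₁-1}(1-x)^{θ₂+n₂-1}e^{β̃n₂x}/I(n₁,n₂,β̃n₂)`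
on `[0,1]` converges weakly to the Dirac measure `δ₀` as `n₂ → ∞`: for every
bounded continuous test function `f` on `[0,1]`,
`lim_{n₂→∞} ∫₀¹ f(x) φ_{β̃n₂}^{(n₁,n₂)}(x) dx = f(0)`. -/
theorem posterior_weak_conv_subcritical (θ₁ θ₂ βt : ℝ)
    (hθ₁ : 0 < θ₁) (hθ₂ : 0 < θ₂) (hβ : βt ≤ 1) (n₁ : ℕ)
    (f : ℝ → ℝ) (hf : ContinuousOn f (Set.Icc 0 1)) :
    Filter.Tendsto (fun n₂ : ℕ =>
        ∫ x in (0:ℝ)..1,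
          f x * (x ^ (θ₁ + n₁ - 1) * (1 - x) ^ (θ₂ + n₂ - 1) * Real.exp (βt * n₂ * x) /
            ∫ y in (0:ℝ)..1,
              y ^ (θ₁ + n₁ - 1) * (1 - y) ^ (θ₂ + n₂ - 1) * Real.exp (βt * n₂ * y)))
      Filter.atTop (𝓝 (f 0)) := by
  refine (tendsto_intervalIntegral_mul_pow_div_of_unique_maximum
    (c := fun x => (1 - x) * exp (βt * x)) zero_lt_one
    (intervalIntegrable_rpow_mul_one_sub_rpow (p := θ₁ + n₁ - 1) (q := θ₂ - 1)
      (by linarith [n₁.cast_nonneg (α := ℝ)]) (by linarith))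
    (fun x hx => mul_pos (rpow_pos_of_pos hx.1 _) (rpow_pos_of_pos (sub_pos.2 hx.2) _))
    (by fun_prop)
    (fun y hy hy₀ => by simpa using one_sub_mul_exp_lt_one hβ (hy.1.lt_of_ne' hy₀) hy.2)
    (fun x hx => mul_nonneg (sub_nonneg.2 hx.2) (exp_pos _).le)
    (left_mem_Icc.2 zero_le_one) hf).congr fun n => ?_
  have hw : ∀ᵐ x, x ∈ uIoc (0:ℝ) 1 →
      x ^ (θ₁ + n₁ - 1) * (1 - x) ^ (θ₂ - 1) * ((1 - x) * exp (βt * x)) ^ n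
        = x ^ (θ₁ + n₁ - 1) * (1 - x) ^ (θ₂ + n - 1) * exp (βt * n * x) := by
    filter_upwards [Measure.ae_ne volume 1] with x hx₁ hx
    rw [uIoc_of_le zero_le_one] at hx
    exact (rpow_mul_one_sub_rpow_add_natCast_mul_exp n (hx.2.lt_of_ne hx₁)).symm
  rw [intervalIntegral.integral_congr_ae hw]
  exact intervalIntegral.integral_congr_ae (hw.mono fun x hx hxI => by rw [hx hxI])
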